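/- Let ρ(x) = (x₁²+x₂²)² + 16x₃² and u = (3/4)ln ρ. At every point where x₁²+x₂² ≠ 0, the function u satisfies the horizontal inverse mean curvature level set equation: the trace of (I - ∇₀u⊗∇₀u/‖∇₀u‖²)(∇₀²u)* equals ‖∇₀u‖², where ∇₀u = (X₁u, X₂u) and (∇₀²u)* is the symmetrized horizontal Hessian with entries ((∇₀²u)*)₁₁ = X₁²u, ((∇₀²u)*)₂₂ = X₂²u, ((∇₀²u)*)₁₂ = ((∇₀²u)*)₂₁ = (X₁X₂u + X₂X₁u)/2. -/

import Mathlib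

/-- The Heisenberg horizontal vector field `X₁ = ∂_{x₁} - (x₂/2)∂_{x₃}`. -/
noncomputable def X1 (f : ℝ × ℝ × ℝ → ℝ) (x : ℝ × ℝ × ℝ) : ℝ :=
  deriv (fun t => f (t, x.2.1, x.2.2)) x.1
    - x.2.1 / 2 * deriv (fun t => f (x.1, x.2.1, t)) x.2.2

/-- The Heisenberg horizontal vector field `X₂ = ∂_{x₂} + (x₁/2)∂_{x₃}`. -/
noncomputable def X2 (f : ℝ × ℝ × ℝ → ℝ) (x : ℝ × ℝ × ℝ) : ℝ :=
  deriv (fun t => f (x.1, t, x.2.2)) x.2.1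
    + x.1 / 2 * deriv (fun t => f (x.1, x.2.1, t)) x.2.2

/-- `ρ(x) = (x₁²+x₂²)² + 16x₃²`. -/
def rho (x : ℝ × ℝ × ℝ) : ℝ := (x.1 ^ 2 + x.2.1 ^ 2) ^ 2 + 16 * x.2.2 ^ 2

/-!
For `u = c log ρ` one has `∇₀u = c ∇₀ρ / ρ` and `(∇₀²u)* = c ((∇₀²ρ)* / ρ - ∇₀ρ ⊗ ∇₀ρ / ρ²)`.
The projection `I - ∇₀u ⊗ ∇₀u / ‖∇₀u‖²` annihilates the rank-one term, so the left-hand side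
equals `(c / ρ) Tr[(I - n ⊗ n)(∇₀²ρ)*]` with `n = ∇₀ρ / ‖∇₀ρ‖`. For the gauge `ρ` the
horizontal Hessian is isotropic, `(∇₀²ρ)* = 12 |z|² I` with `|z|² = x₁² + x₂²`, and `‖∇₀ρ‖² = 16 |z|² ρ`; hence the left side is
`12 c |z|² / ρ` and the right side `16 c² |z|² / ρ`, which agree exactly for `c = 3/4`.
-/

open Topology

def IsDirectionalDerivative {E : Type*} [NormedAddCommGroup E] [NormedSpace ℝ E]
    (Y : (E → ℝ) → E → ℝ) (V : E → E) : Prop :=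
  ∀ f x, DifferentiableAt ℝ f x → Y f x = fderiv ℝ f x (V x)

namespace IsDirectionalDerivative

variable {E : Type*} [NormedAddCommGroup E] [NormedSpace ℝ E]
  {Y : (E → ℝ) → E → ℝ} {V : E → E} {f g : E → ℝ} {x : E}

theorem congr_of_eventuallyEq (hY : IsDirectionalDerivative Y V) (hg : DifferentiableAt ℝ g x)
    (hfg : f =ᶠ[𝓝 x] g) : Y f x = Y g x := by
  rw [hY f x (hg.congr_of_eventuallyEq hfg), hY g x hg, hfg.fderiv_eq]

theorem const_mul_log (hY : IsDirectionalDerivative Y V) (c : ℝ) (hf : DifferentiableAt ℝ f x)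
    (hfx : f x ≠ 0) : Y (fun y => c * Real.log (f y)) x = c * Y f x / f x := by
  rw [hY _ _ ((hf.log hfx).const_mul c), hY f x hf,
    ((hf.hasFDerivAt.log hfx).const_mul c).fderiv]
  simp only [smul_apply, smul_eq_mul]
  field_simp

theorem const_mul_div (hY : IsDirectionalDerivative Y V) (c : ℝ) (hf : DifferentiableAt ℝ f x)
    (hg : DifferentiableAt ℝ g x) (hgx : g x ≠ 0) :
    Y (fun y => c * f y / g y) x = c * (Y f x * g x - f x * Y g x) / g x ^ 2 := by
  have hinv : HasFDerivAt (fun y => (g y)⁻¹) (-(g x ^ 2)⁻¹ • fderiv ℝ g x) x :=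
    (hasDerivAt_inv hgx).comp_hasFDerivAt x hg.hasFDerivAt
  have hquot := (hf.hasFDerivAt.const_mul c).fun_mul hinv
  simp only [← div_eq_mul_inv] at hquot
  rw [hY _ _ hquot.differentiableAt, hquot.fderiv, hY f x hf, hY g x hg]
  simp only [add_apply, smul_apply, smul_eq_mul]
  field_simp
  ring

theorem const_mul_log_second {Z : (E → ℝ) → E → ℝ} {W : E → E}
    (hY : IsDirectionalDerivative Y V) (hZ : IsDirectionalDerivative Z W) (c : ℝ)
    (hf : ∀ᶠ y in 𝓝 x, DifferentiableAt ℝ f y) (hYf : DifferentiableAt ℝ (Y f) x)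
    (hfx : f x ≠ 0) :
    Z (Y fun y => c * Real.log (f y)) x = c * (Z (Y f) x * f x - Y f x * Z f x) / f x ^ 2 := by
  have hfx_diff := hf.self_of_nhds
  have hlog : (Y fun y => c * Real.log (f y)) =ᶠ[𝓝 x] fun y => c * Y f y / f y := by
    filter_upwards [hf, hfx_diff.continuousAt.eventually_ne hfx] with y hy_diff hy
    exact hY.const_mul_log c hy_diff hy
  rw [hZ.congr_of_eventuallyEq (by fun_prop (disch := assumption)) hlog,
    hZ.const_mul_div c hYf hfx_diff hfx]

end IsDirectionalDerivative

theorem isDirectionalDerivative_X1 :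
    IsDirectionalDerivative X1 fun x => (1, 0, -(x.2.1 / 2)) := by
  intro f x hf
  have h1 : HasDerivAt (fun t => f (t, x.2.1, x.2.2)) (fderiv ℝ f x (1, 0, 0)) x.1 :=
    hf.hasFDerivAt.comp_hasDerivAt x.1
      ((hasDerivAt_id _).prodMk ((hasDerivAt_const _ _).prodMk (hasDerivAt_const _ _)))
  have h3 : HasDerivAt (fun t => f (x.1, x.2.1, t)) (fderiv ℝ f x (0, 0, 1)) x.2.2 :=
    hf.hasFDerivAt.comp_hasDerivAt x.2.2
      ((hasDerivAt_const _ _).prodMk ((hasDerivAt_const _ _).prodMk (hasDerivAt_id _)))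
  rw [X1, h1.deriv, h3.deriv, ← smul_eq_mul, ← map_smul, ← map_sub]
  congr 1
  simp

theorem isDirectionalDerivative_X2 :
    IsDirectionalDerivative X2 fun x => (0, 1, x.1 / 2) := by
  intro f x hf
  have h2 : HasDerivAt (fun t => f (x.1, t, x.2.2)) (fderiv ℝ f x (0, 1, 0)) x.2.1 :=
    hf.hasFDerivAt.comp_hasDerivAt x.2.1
      ((hasDerivAt_const _ _).prodMk ((hasDerivAt_id _).prodMk (hasDerivAt_const _ _)))
  have h3 : HasDerivAt (fun t => f (x.1, x.2.1, t)) (fderiv ℝ f x (0, 0, 1)) x.2.2 :=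
    hf.hasFDerivAt.comp_hasDerivAt x.2.2
      ((hasDerivAt_const _ _).prodMk ((hasDerivAt_const _ _).prodMk (hasDerivAt_id _)))
  rw [X2, h2.deriv, h3.deriv, ← smul_eq_mul, ← map_smul, ← map_add]
  congr 1
  simp

/-- `Tr[(I - p ⊗ p / ‖p‖²) A]` for `p = (a, b)` and the symmetric matrix
`A = [[A11, A12], [A12, A22]]`. -/
noncomputable def meanCurvatureOperator (a b A11 A22 A12 : ℝ) : ℝ :=
  (1 - a ^ 2 / (a ^ 2 + b ^ 2)) * A11 + (1 - b ^ 2 / (a ^ 2 + b ^ 2)) * A22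
    - 2 * (a * b / (a ^ 2 + b ^ 2)) * A12

theorem meanCurvatureOperator_const_mul_log (c ρ α β H11 H22 H12 : ℝ) (hc : c ≠ 0)
    (hρ : ρ ≠ 0) (hαβ : α ^ 2 + β ^ 2 ≠ 0) :
    meanCurvatureOperator (c * α / ρ) (c * β / ρ) (c * (H11 * ρ - α * α) / ρ ^ 2)
      (c * (H22 * ρ - β * β) / ρ ^ 2) (c * (H12 * ρ - α * β) / ρ ^ 2)
      = c / ρ * meanCurvatureOperator α β H11 H22 H12 := by
  unfold meanCurvatureOperator
  field_simp
  ring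

theorem meanCurvatureOperator_isotropic (α β μ : ℝ) (hαβ : α ^ 2 + β ^ 2 ≠ 0) :
    meanCurvatureOperator α β μ μ 0 = μ := by
  unfold meanCurvatureOperator
  field_simp
  ring

theorem rho_pos {x : ℝ × ℝ × ℝ} (hx : x.1 ^ 2 + x.2.1 ^ 2 ≠ 0) : 0 < rho x := by
  unfold rho; positivity

theorem differentiable_rho : Differentiable ℝ rho := by
  unfold rho; fun_prop

theorem X1_rho : X1 rho = fun y => 4 * (y.1 * (y.1 ^ 2 + y.2.1 ^ 2) - 4 * y.2.1 * y.2.2) := by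
  funext y
  rw [X1]
  simp (disch := fun_prop) only [rho, deriv_fun_add, deriv_fun_mul, deriv_fun_pow, deriv_const',
    deriv_id'']
  ring

theorem X2_rho : X2 rho = fun y => 4 * (y.2.1 * (y.1 ^ 2 + y.2.1 ^ 2) + 4 * y.1 * y.2.2) := by
  funext y
  rw [X2]
  simp (disch := fun_prop) only [rho, deriv_fun_add, deriv_fun_mul, deriv_fun_pow, deriv_const',
    deriv_id'']
  ring

theorem differentiable_X1_rho : Differentiable ℝ (X1 rho) := by
  rw [X1_rho]; fun_prop

theorem differentiable_X2_rho : Differentiable ℝ (X2 rho) := by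
  rw [X2_rho]; fun_prop

theorem X1_X1_rho (x : ℝ × ℝ × ℝ) : X1 (X1 rho) x = 12 * (x.1 ^ 2 + x.2.1 ^ 2) := by
  rw [X1_rho, X1]
  simp (disch := fun_prop) only [deriv_fun_add, deriv_fun_sub, deriv_fun_mul, deriv_fun_pow,
    deriv_const', deriv_id'', deriv_const_mul_id']
  ring

theorem X2_X2_rho (x : ℝ × ℝ × ℝ) : X2 (X2 rho) x = 12 * (x.1 ^ 2 + x.2.1 ^ 2) := by
  rw [X2_rho, X2]
  simp (disch := fun_prop) only [deriv_fun_add, deriv_fun_mul, deriv_fun_pow, deriv_const',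
    deriv_id'', deriv_const_mul_id']
  ring

theorem X1_X2_rho (x : ℝ × ℝ × ℝ) : X1 (X2 rho) x = 16 * x.2.2 := by
  rw [X2_rho, X1]
  simp (disch := fun_prop) only [deriv_fun_add, deriv_fun_mul, deriv_fun_pow, deriv_const',
    deriv_id'', deriv_const_mul_id']
  ring

theorem X2_X1_rho (x : ℝ × ℝ × ℝ) : X2 (X1 rho) x = -16 * x.2.2 := by
  rw [X1_rho, X2]
  simp (disch := fun_prop) only [deriv_fun_add, deriv_fun_sub, deriv_fun_mul, deriv_fun_pow,
    deriv_const', deriv_id'', deriv_const_mul_id']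
  ring

theorem X1_rho_sq_add_X2_rho_sq (x : ℝ × ℝ × ℝ) :
    X1 rho x ^ 2 + X2 rho x ^ 2 = 16 * (x.1 ^ 2 + x.2.1 ^ 2) * rho x := by
  rw [X1_rho, X2_rho, rho]
  ring

/-- `u = (3/4)ln ρ` satisfies the level-set equation of the horizontal inverse
mean curvature flow: `Tr[(I - ∇₀u⊗∇₀u/‖∇₀u‖²)(∇₀²u)*] = ‖∇₀u‖²` off the `x₃`-axis. -/
theorem u_satisfies_HIMCF_level_set_equation (x : ℝ × ℝ × ℝ)
    (hx : x.1 ^ 2 + x.2.1 ^ 2 ≠ 0) :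
    let u : ℝ × ℝ × ℝ → ℝ := fun y => 3 / 4 * Real.log (rho y)
    let a := X1 u x
    let b := X2 u x
    let A11 := X1 (X1 u) x
    let A22 := X2 (X2 u) x
    let A12 := (X1 (X2 u) x + X2 (X1 u) x) / 2
    (1 - a ^ 2 / (a ^ 2 + b ^ 2)) * A11 + (1 - b ^ 2 / (a ^ 2 + b ^ 2)) * A22
      - 2 * (a * b / (a ^ 2 + b ^ 2)) * A12
      = a ^ 2 + b ^ 2 := by
  intro u a b A11 A22 A12
  have hX1 := isDirectionalDerivative_X1
  have hX2 := isDirectionalDerivative_X2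
  have hρ : rho x ≠ 0 := (rho_pos hx).ne'
  have hρ_diff : ∀ᶠ y in 𝓝 x, DifferentiableAt ℝ rho y := .of_forall differentiable_rho
  have hgrad : X1 rho x ^ 2 + X2 rho x ^ 2 ≠ 0 := by
    rw [X1_rho_sq_add_X2_rho_sq]; exact mul_ne_zero (mul_ne_zero (by norm_num) hx) hρ
  have ha : a = 3 / 4 * X1 rho x / rho x := hX1.const_mul_log _ (differentiable_rho x) hρ
  have hb : b = 3 / 4 * X2 rho x / rho x := hX2.const_mul_log _ (differentiable_rho x) hρ
  have hA11 : A11 = 3 / 4 * (X1 (X1 rho) x * rho x - X1 rho x * X1 rho x) / rho x ^ 2 :=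
    hX1.const_mul_log_second hX1 _ hρ_diff (differentiable_X1_rho x) hρ
  have hA22 : A22 = 3 / 4 * (X2 (X2 rho) x * rho x - X2 rho x * X2 rho x) / rho x ^ 2 :=
    hX2.const_mul_log_second hX2 _ hρ_diff (differentiable_X2_rho x) hρ
  have hA12 : A12 = 3 / 4 * (0 * rho x - X1 rho x * X2 rho x) / rho x ^ 2 := by
    simp only [A12, u, hX2.const_mul_log_second hX1 _ hρ_diff (differentiable_X2_rho x) hρ,
      hX1.const_mul_log_second hX2 _ hρ_diff (differentiable_X1_rho x) hρ, X1_X2_rho, X2_X1_rho]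
    ring
  calc meanCurvatureOperator a b A11 A22 A12
      = 3 / 4 / rho x * meanCurvatureOperator (X1 rho x) (X2 rho x)
          (12 * (x.1 ^ 2 + x.2.1 ^ 2)) (12 * (x.1 ^ 2 + x.2.1 ^ 2)) 0 := by
        rw [ha, hb, hA11, hA22, hA12, X1_X1_rho, X2_X2_rho]
        exact meanCurvatureOperator_const_mul_log _ _ _ _ _ _ _ (by norm_num) hρ hgrad
    _ = 3 / 4 / rho x * (12 * (x.1 ^ 2 + x.2.1 ^ 2)) := by
        rw [meanCurvatureOperator_isotropic _ _ _ hgrad]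
    _ = a ^ 2 + b ^ 2 := by
        rw [ha, hb]
        field_simp
        linear_combination -3 * X1_rho_sq_add_X2_rho_sq x
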